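/- Let μ be a probability measure on ℝⁿ satisfying the Cheeger inequality h·∫|g - ∫g dμ| dμ ≤ ∫|∇g| dμ with constant h = 1 for all Lipschitz g ∈ L¹(μ). Then for every Lipschitz f: ℝⁿ → ℝ, ∫ F(|f - ∫f dμ|) dμ ≤ 192·∫ F(|∇f|) dμ, where F(t) = t - log(1+t). -/

import Mathlib

/-!
Let `m` be a median of `f` and `Fpos t = F (max t 0)`. The Lipschitz function `Fpos (f - m)`
vanishes on a set of measure `≥ 1/2`, so its mean is at most its mean deviation, which Cheeger
bounds by `∫ Fpos' (f - m) ‖Df‖`. Adding the same bound for `m - f` gives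
`∫ F |f - m| ≤ ∫ F' |f - m| ‖Df‖`, and the Young-type inequality `F' a * b ≤ F a / 2 + 8 F b`
absorbs half of the left side: `∫ F |f - m| ≤ 16 ∫ F ‖Df‖`. Replacing the median by the mean
costs a factor `4`, by Jensen and `F (a + b) ≤ 2 F a + 2 F b`.
-/

open MeasureTheory Real Filter Set Asymptotics ProbabilityTheory
open scoped Topology NNReal

section ChainRule

variable {E : Type*} [NormedAddCommGroup E] [NormedSpace ℝ E] {f : E → ℝ} {φ φ' : ℝ → ℝ}

theorem LipschitzWith.hasFDerivAt_comp_of_hasDerivAt_zero {L : ℝ≥0} (hf : LipschitzWith L f)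
    {x : E} (hφ : HasDerivAt φ 0 (f x)) : HasFDerivAt (fun y => φ (f y)) (0 : E →L[ℝ] ℝ) x := by
  have hφf := hφ.isLittleO.comp_tendsto (hf.continuous.tendsto x)
  have hf_sub : (fun y => f y - f x) =O[𝓝 x] fun y => y - x :=
    IsBigO.of_bound L (Eventually.of_forall fun y => by
      simpa only [Real.norm_eq_abs, ← dist_eq_norm, Real.dist_eq] using hf.dist_le_mul y x)
  exact .of_isLittleO (by simpa [Function.comp_def] using hφf.trans_isBigO hf_sub)

theorem DifferentiableAt.of_comp_of_hasStrictDerivAt {x : E} {d : ℝ} (hd : d ≠ 0)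
    (hφ : HasStrictDerivAt φ d (f x)) (hf : ContinuousAt f x)
    (h : DifferentiableAt ℝ (fun y => φ (f y)) x) : DifferentiableAt ℝ f x := by
  have hinv : ∀ᶠ s in 𝓝 (f x), hφ.localInverse φ d (f x) hd (φ s) = s :=
    (hφ.hasStrictFDerivAt_equiv hd).eventually_left_inverse
  refine ((hφ.to_localInverse hd).hasDerivAt.differentiableAt.comp x h).congr_of_eventuallyEq ?_
  exact (hf.eventually hinv).mono fun y hy => hy.symm

/-- At a point where `f` is not differentiable, `φ ∘ f` has derivative `0` if `φ' (f x) = 0`, and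
is not differentiable otherwise (compose with a local inverse of `φ`), so `fderiv` is `0`. -/
theorem LipschitzWith.norm_fderiv_comp_le {L : ℝ≥0} (hf : LipschitzWith L f)
    (hφ : ∀ s, HasDerivAt φ (φ' s) s) (hφ' : Continuous φ') (x : E) :
    ‖fderiv ℝ (fun y => φ (f y)) x‖ ≤ |φ' (f x)| * ‖fderiv ℝ f x‖ := by
  by_cases hfx : DifferentiableAt ℝ f x
  · have hcomp : HasFDerivAt (fun y => φ (f y)) (φ' (f x) • fderiv ℝ f x) x :=
      (hφ (f x)).comp_hasFDerivAt x hfx.hasFDerivAt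
    rw [hcomp.fderiv, norm_smul, Real.norm_eq_abs]
  rw [fderiv_zero_of_not_differentiableAt hfx, norm_zero, mul_zero]
  by_cases hd : φ' (f x) = 0
  · rw [(hf.hasFDerivAt_comp_of_hasDerivAt_zero (hd ▸ hφ (f x))).fderiv, norm_zero]
  have hstrict : HasStrictDerivAt φ (φ' (f x)) (f x) :=
    hasStrictDerivAt_of_hasDerivAt_of_continuousAt (.of_forall hφ) hφ'.continuousAt
  have hφf : ¬ DifferentiableAt ℝ (fun y => φ (f y)) x := fun h =>
    hfx (h.of_comp_of_hasStrictDerivAt hd hstrict hf.continuous.continuousAt)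
  rw [fderiv_zero_of_not_differentiableAt hφf, norm_zero]

end ChainRule

section LipschitzIntegrable

variable {E : Type*} [NormedAddCommGroup E] [NormedSpace ℝ E] [MeasurableSpace E]
  [OpensMeasurableSpace E] {μ : Measure E} [IsFiniteMeasure μ] {f : E → ℝ} {L : ℝ≥0}

theorem LipschitzWith.integrable_norm_fderiv (hf : LipschitzWith L f) :
    Integrable (fun x => ‖fderiv ℝ f x‖) μ :=
  .of_bound (measurable_fderiv ℝ f).norm.aestronglyMeasurable L
    (ae_of_all _ fun x => by simpa using norm_fderiv_le_of_lipschitz ℝ hf)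

theorem LipschitzWith.integrable_mul_norm_fderiv (hf : LipschitzWith L f) {w : ℝ → ℝ}
    (hw : Continuous w) {C : ℝ} (hwC : ∀ t, |w t| ≤ C) :
    Integrable (fun x => w (f x) * ‖fderiv ℝ f x‖) μ :=
  hf.integrable_norm_fderiv.bdd_mul (hw.comp hf.continuous).aestronglyMeasurable
    (ae_of_all _ fun x => hwC (f x))

end LipschitzIntegrable

/-- The median is `m = inf {t | cdf t ≥ 1/2}`: right continuity of the cdf gives the first
bound, and the left limit of the cdf at `m`, which is `ν (Iio m)`, is at most `1/2`. -/
theorem exists_median (ν : Measure ℝ) [IsProbabilityMeasure ν] :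
    ∃ m, 1 / 2 ≤ ν.real (Iic m) ∧ 1 / 2 ≤ ν.real (Ici m) := by
  set T := {t | 1 / 2 ≤ cdf ν t}
  have hT : T.Nonempty :=
    ((tendsto_cdf_atTop ν).eventually (eventually_ge_nhds (by norm_num : (1 / 2 : ℝ) < 1))).exists
  obtain ⟨t₀, ht₀⟩ := ((tendsto_cdf_atBot ν).eventually
    (eventually_lt_nhds (by norm_num : (0 : ℝ) < 1 / 2))).exists_forall_of_atBot
  have hTbdd : BddBelow T := ⟨t₀, fun t ht => by
    by_contra! h
    exact (ht₀ t h.le).not_ge ht⟩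
  set m := sInf T
  have habove : ∀ t > m, 1 / 2 ≤ cdf ν t := fun t ht => by
    obtain ⟨s, hs, hst⟩ := exists_lt_of_csInf_lt hT ht
    exact hs.trans (monotone_cdf ν hst.le)
  have hbelow : ∀ t < m, cdf ν t < 1 / 2 := fun t ht =>
    not_le.1 fun h => notMem_of_lt_csInf (s := T) ht hTbdd h
  refine ⟨m, ?_, ?_⟩
  · rw [← cdf_eq_real]
    exact ge_of_tendsto (((cdf ν).right_continuous m).mono Ioi_subset_Ici_self)
      (eventually_nhdsWithin_of_forall habove)
  · have hleft : Function.leftLim (cdf ν) m ≤ 1 / 2 :=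
      le_of_tendsto ((monotone_cdf ν).tendsto_leftLim m)
        (eventually_nhdsWithin_of_forall fun t ht => (hbelow t ht).le)
    have hIio : ν (Iio m) = ENNReal.ofReal (Function.leftLim (cdf ν) m) := by
      simpa only [measure_cdf, sub_zero] using (cdf ν).measure_Iio (tendsto_cdf_atBot ν) m
    have hIio_le : ν.real (Iio m) ≤ 1 / 2 :=
      ENNReal.toReal_le_of_le_ofReal (by norm_num) (hIio ▸ ENNReal.ofReal_le_ofReal hleft)
    rw [← compl_Iio, probReal_compl_eq_one_sub measurableSet_Iio]
    linarith

theorem integral_le_integral_abs_sub_integral {α : Type*} [MeasurableSpace α] {μ : Measure α}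
    [IsProbabilityMeasure μ] {g : α → ℝ} (hg : Integrable g μ) (hg0 : ∀ x, 0 ≤ g x) {S : Set α}
    (hS : MeasurableSet S) (hgS : ∀ x ∈ S, g x = 0) (hμS : 1 / 2 ≤ μ.real S) :
    ∫ x, g x ∂μ ≤ ∫ x, |g x - ∫ y, g y ∂μ| ∂μ := by
  set A := ∫ y, g y ∂μ
  have hA : 0 ≤ A := integral_nonneg hg0
  have hneg : Integrable (fun x => max (A - g x) 0) μ := ((integrable_const A).sub hg).pos_part
  have habs : ∀ x, |g x - A| = (g x - A) + 2 * max (A - g x) 0 := fun x => by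
    rcases le_total A (g x) with h | h
    · rw [abs_of_nonneg (by linarith), max_eq_right (by linarith)]; ring
    · rw [abs_of_nonpos (by linarith), max_eq_left (by linarith)]; ring
  have hcentered : ∫ x, (g x - A) ∂μ = 0 := by
    rw [integral_sub hg (integrable_const A), integral_const, probReal_univ, one_smul, sub_self]
  have hS_eq : ∫ x in S, max (A - g x) 0 ∂μ = μ.real S * A := by
    rw [setIntegral_congr_fun hS (g := fun _ => A) fun x hx => by simp [hgS x hx, hA],
      setIntegral_const, smul_eq_mul]
  calc A ≤ 2 * (μ.real S * A) := by nlinarith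
    _ = 2 * ∫ x in S, max (A - g x) 0 ∂μ := by rw [hS_eq]
    _ ≤ 2 * ∫ x, max (A - g x) 0 ∂μ := mul_le_mul_of_nonneg_left
      (setIntegral_le_integral hneg (ae_of_all _ fun x => le_max_right _ _)) (by norm_num)
    _ = ∫ x, |g x - A| ∂μ := by
      rw [integral_congr_ae (ae_of_all _ habs),
        integral_add (f := fun x => g x - A) (hg.sub (integrable_const A))
        (hneg.const_mul 2), hcentered, integral_const_mul, zero_add]

theorem Real.log_le_sub_inv_div_two {x : ℝ} (hx : 1 ≤ x) : log x ≤ (x - x⁻¹) / 2 := by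
  rw [← sinh_log (by linarith)]
  exact self_le_sinh_iff.2 (log_nonneg hx)

namespace OrliczCheeger

noncomputable def F (t : ℝ) : ℝ := t - log (1 + t)

theorem F_zero : F 0 = 0 := by simp [F]

theorem hasDerivAt_F {t : ℝ} (ht : -1 < t) : HasDerivAt F (t / (1 + t)) t := by
  have h := (hasDerivAt_id' t).sub (((hasDerivAt_id' t).const_add 1).log (by linarith))
  have hne : 1 + t ≠ 0 := by linarith
  rwa [show t / (1 + t) = 1 - 1 / (1 + t) by field_simp; ring]

theorem F_nonneg {t : ℝ} (ht : -1 < t) : 0 ≤ F t := by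
  have := log_le_sub_one_of_pos (show 0 < 1 + t by linarith)
  rw [F]; linarith

theorem F_le_self {t : ℝ} (ht : 0 ≤ t) : F t ≤ t := by
  have := log_nonneg (show 1 ≤ 1 + t by linarith)
  rw [F]; linarith

theorem F_le_F {a b : ℝ} (ha : 0 ≤ a) (hab : a ≤ b) : F a ≤ F b := by
  have hb : 0 ≤ b := ha.trans hab
  have h := log_le_sub_one_of_pos (show 0 < (1 + b) / (1 + a) by positivity)
  rw [log_div (by positivity) (by positivity), div_sub_one (by positivity)] at h
  have h' : (1 + b - (1 + a)) / (1 + a) ≤ b - a := by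
    rw [div_le_iff₀ (by positivity)]; nlinarith
  rw [F, F]; linarith

theorem convexOn_F : ConvexOn ℝ (Ici 0) F := by
  have hlog : ConcaveOn ℝ (Ioi (-1)) fun t => log (1 + t) := by
    simpa [Function.comp_def, preimage_add_const_Ioi] using
      strictConcaveOn_log_Ioi.concaveOn.translate_right (1 : ℝ)
  exact (convexOn_id (convex_Ici 0)).sub (hlog.subset (Ici_subset_Ioi.2 (by norm_num))
    (convex_Ici 0))

theorem sq_div_one_add_le_two_mul_F {t : ℝ} (ht : 0 ≤ t) : t ^ 2 / (1 + t) ≤ 2 * F t := by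
  have h := log_le_sub_inv_div_two (show 1 ≤ 1 + t by linarith)
  have hkey : t ^ 2 / (1 + t) = 2 * t - ((1 + t) - (1 + t)⁻¹) := by
    field_simp
    ring
  rw [hkey, F]; linarith

theorem F_two_mul_le {t : ℝ} (ht : 0 ≤ t) : F (2 * t) ≤ 4 * F t := by
  have h1 := sq_div_one_add_le_two_mul_F ht
  have h2 : 2 * log (1 + t) - log (1 + 2 * t) ≤ t ^ 2 / (1 + t) := by
    have hd := log_le_sub_one_of_pos (show 0 < (1 + t) ^ 2 / (1 + 2 * t) by positivity)
    rw [log_div (by positivity) (by positivity), log_pow, div_sub_one (by positivity)] at hd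
    calc 2 * log (1 + t) - log (1 + 2 * t) ≤ ((1 + t) ^ 2 - (1 + 2 * t)) / (1 + 2 * t) := by
          exact_mod_cast hd
      _ = t ^ 2 / (1 + 2 * t) := by ring
      _ ≤ t ^ 2 / (1 + t) := by gcongr; linarith
  rw [F, F] at *
  linarith

theorem F_add_le {a b : ℝ} (ha : 0 ≤ a) (hb : 0 ≤ b) : F (a + b) ≤ 2 * F a + 2 * F b := by
  have hmid := convexOn_F.2 (mem_Ici.2 (by positivity : (0 : ℝ) ≤ 2 * a))
    (mem_Ici.2 (by positivity : (0 : ℝ) ≤ 2 * b)) (by norm_num : (0 : ℝ) ≤ 1 / 2)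
    (by norm_num : (0 : ℝ) ≤ 1 / 2) (by norm_num)
  simp only [smul_eq_mul] at hmid
  have hab : 1 / 2 * (2 * a) + 1 / 2 * (2 * b) = a + b := by ring
  rw [hab] at hmid
  linarith [F_two_mul_le ha, F_two_mul_le hb]

theorem F_abs_add_le (x y : ℝ) : F |x + y| ≤ 2 * F |x| + 2 * F |y| :=
  (F_le_F (abs_nonneg _) (abs_add_le x y)).trans (F_add_le (abs_nonneg x) (abs_nonneg y))

/-- Young-type inequality for `F` with itself as conjugate; `a / (1 + a)` is `F' a`. -/
theorem div_one_add_mul_le {a b : ℝ} (ha : 0 ≤ a) (hb : 0 ≤ b) :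
    a / (1 + a) * b ≤ F a / 2 + 8 * F b := by
  rcases le_or_gt b (a / 4) with h | h
  · have h1 : a / (1 + a) * b ≤ a ^ 2 / (1 + a) / 4 := by
      calc a / (1 + a) * b ≤ a / (1 + a) * (a / 4) := by gcongr
        _ = a ^ 2 / (1 + a) / 4 := by ring
    linarith [sq_div_one_add_le_two_mul_F ha, F_nonneg (show -1 < b by linarith)]
  · have h1 : a / (1 + a) * b ≤ 4 * (b ^ 2 / (1 + b)) := by
      calc a / (1 + a) * b ≤ 4 * b / (1 + 4 * b) * b := by
            refine mul_le_mul_of_nonneg_right ?_ hb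
            rw [div_le_div_iff₀ (by positivity) (by positivity)]
            nlinarith
        _ = 4 * b ^ 2 / (1 + 4 * b) := by ring
        _ ≤ 4 * b ^ 2 / (1 + b) := by gcongr; linarith
        _ = 4 * (b ^ 2 / (1 + b)) := by ring
    linarith [sq_div_one_add_le_two_mul_F hb, F_nonneg (show -1 < a by linarith)]

theorem measurable_F : Measurable F := by unfold F; fun_prop

theorem integrable_F_abs {α : Type*} [MeasurableSpace α] {μ : Measure α} {h : α → ℝ}
    (hh : Integrable h μ) : Integrable (fun x => F |h x|) μ :=
  hh.norm.mono' (measurable_F.comp_aemeasurable hh.aemeasurable.abs).aestronglyMeasurable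
    (ae_of_all _ fun x => by
      rw [Real.norm_eq_abs, abs_of_nonneg (F_nonneg (by linarith [abs_nonneg (h x)]))]
      exact F_le_self (abs_nonneg _))

theorem F_integral_le_integral_F {α : Type*} [MeasurableSpace α] {μ : Measure α}
    [IsProbabilityMeasure μ] {h : α → ℝ} (hh : Integrable h μ) (h0 : ∀ x, 0 ≤ h x)
    (hF : Integrable (fun x => F (h x)) μ) :
    F (∫ x, h x ∂μ) ≤ ∫ x, F (h x) ∂μ := by
  have hcont : ContinuousOn F (Ici 0) := by
    unfold F
    exact continuousOn_id.sub
      (continuousOn_log.comp (by fun_prop) fun t (ht : 0 ≤ t) => by simp; linarith)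
  simpa only [average_eq_integral] using
    convexOn_F.map_average_le hcont isClosed_Ici (ae_of_all μ h0) hh hF

noncomputable def Fpos (t : ℝ) : ℝ := F (max t 0)

noncomputable def Fpos' (t : ℝ) : ℝ := max t 0 / (1 + max t 0)

theorem hasDerivAt_Fpos (t : ℝ) : HasDerivAt Fpos (Fpos' t) t := by
  rcases lt_trichotomy t 0 with ht | rfl | ht
  · have hzero : Fpos =ᶠ[𝓝 t] fun _ => 0 := by
      filter_upwards [Iio_mem_nhds ht] with s hs
      rw [Fpos, max_eq_right hs.le, F_zero]
    rw [Fpos', max_eq_right ht.le, zero_div]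
    exact (hasDerivAt_const t 0).congr_of_eventuallyEq hzero
  · have hF0 : HasDerivAt F 0 (max 0 0) := by simpa using hasDerivAt_F (t := 0) (by norm_num)
    rw [show Fpos' 0 = 0 by simp [Fpos']]
    exact ((LipschitzWith.id.max_const 0).hasFDerivAt_comp_of_hasDerivAt_zero hF0).hasDerivAt
  · have hF : Fpos =ᶠ[𝓝 t] F := by
      filter_upwards [Ioi_mem_nhds ht] with s hs
      rw [Fpos, max_eq_left hs.le]
    rw [Fpos', max_eq_left ht.le]
    exact (hasDerivAt_F (by linarith)).congr_of_eventuallyEq hF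

theorem Fpos'_nonneg (t : ℝ) : 0 ≤ Fpos' t := by unfold Fpos'; positivity

theorem abs_Fpos'_le_one (t : ℝ) : |Fpos' t| ≤ 1 := by
  unfold Fpos'
  rw [abs_of_nonneg (by positivity), div_le_one (by positivity)]
  linarith

theorem continuous_Fpos' : Continuous Fpos' :=
  (continuous_id.max continuous_const).div
    (continuous_const.add (continuous_id.max continuous_const)) fun t => by positivity

theorem lipschitzWith_Fpos : LipschitzWith 1 Fpos :=
  lipschitzWith_of_nnnorm_deriv_le (fun t => (hasDerivAt_Fpos t).differentiableAt) fun t => by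
    rw [(hasDerivAt_Fpos t).deriv, ← NNReal.coe_le_coe, coe_nnnorm, Real.norm_eq_abs]
    exact abs_Fpos'_le_one t

theorem Fpos_of_nonpos {t : ℝ} (ht : t ≤ 0) : Fpos t = 0 := by
  rw [Fpos, max_eq_right ht, F_zero]

theorem Fpos_nonneg (t : ℝ) : 0 ≤ Fpos t := F_nonneg (by linarith [le_max_right t 0])

theorem Fpos_le_abs (t : ℝ) : Fpos t ≤ |t| :=
  (F_le_self (le_max_right t 0)).trans (max_le (le_abs_self t) (abs_nonneg t))

theorem Fpos_add_Fpos_neg (t : ℝ) : Fpos t + Fpos (-t) = F |t| := by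
  rcases le_total t 0 with ht | ht
  · rw [Fpos_of_nonpos ht, zero_add, Fpos, max_eq_left (by linarith), abs_of_nonpos ht]
  · rw [Fpos_of_nonpos (show -t ≤ 0 by linarith), add_zero, Fpos, max_eq_left ht,
      abs_of_nonneg ht]

theorem Fpos'_add_Fpos'_neg (t : ℝ) : Fpos' t + Fpos' (-t) = |t| / (1 + |t|) := by
  rcases le_total t 0 with ht | ht
  · rw [Fpos', Fpos', max_eq_right ht, max_eq_left (by linarith), abs_of_nonpos ht]
    simp
  · rw [Fpos', Fpos', max_eq_left ht, max_eq_right (by linarith), abs_of_nonneg ht]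
    simp

theorem integrable_Fpos_comp {α : Type*} [MeasurableSpace α] {μ : Measure α} {h : α → ℝ}
    (hh : Integrable h μ) : Integrable (fun x => Fpos (h x)) μ :=
  hh.abs.mono' (lipschitzWith_Fpos.continuous.comp_aestronglyMeasurable hh.aestronglyMeasurable)
    (ae_of_all _ fun x => by simpa [abs_of_nonneg (Fpos_nonneg _)] using Fpos_le_abs (h x))

theorem integral_F_abs_sub_integral_le {α : Type*} [MeasurableSpace α] {μ : Measure α}
    [IsProbabilityMeasure μ] {h : α → ℝ} (hh : Integrable h μ) (m : ℝ) :
    ∫ x, F |h x - ∫ y, h y ∂μ| ∂μ ≤ 4 * ∫ x, F |h x - m| ∂μ := by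
  set c := ∫ y, h y ∂μ
  have hhm : Integrable (fun x => h x - m) μ := hh.sub (integrable_const m)
  have hX := integrable_F_abs hhm
  have hJensen : F |m - c| ≤ ∫ x, F |h x - m| ∂μ := by
    have hcm : |m - c| ≤ ∫ x, |h x - m| ∂μ := by
      rw [abs_sub_comm, show c - m = ∫ x, (h x - m) ∂μ by
        rw [integral_sub hh (integrable_const m), integral_const, probReal_univ, one_smul]]
      exact abs_integral_le_integral_abs
    exact (F_le_F (abs_nonneg _) hcm).trans
      (F_integral_le_integral_F hhm.abs (fun x => abs_nonneg _) hX)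
  have htriangle : ∫ x, F |h x - c| ∂μ ≤ ∫ x, (2 * F |h x - m| + 2 * F |m - c|) ∂μ :=
    integral_mono (integrable_F_abs (hh.sub (integrable_const c)))
      ((hX.const_mul 2).add (integrable_const _)) fun x => by
        simpa using F_abs_add_le (h x - m) (m - c)
  rw [integral_add (hX.const_mul 2) (integrable_const _), integral_const_mul, integral_const,
    probReal_univ, one_smul] at htriangle
  linarith

section Cheeger

variable {E : Type*} [NormedAddCommGroup E] [NormedSpace ℝ E] [MeasurableSpace E]

/-- Where `g` is not differentiable, `fderiv` takes the junk value `0`. -/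
def CheegerInequality (μ : Measure E) : Prop :=
  ∀ (g : E → ℝ) (L : ℝ≥0), LipschitzWith L g → Integrable g μ →
    ∫ x, |g x - ∫ y, g y ∂μ| ∂μ ≤ ∫ x, ‖fderiv ℝ g x‖ ∂μ

variable [OpensMeasurableSpace E] {μ : Measure E} [IsProbabilityMeasure μ] {f : E → ℝ} {L : ℝ≥0}

theorem integral_Fpos_le (hC : CheegerInequality μ) {h : E → ℝ} (hh : LipschitzWith L h)
    (hhi : Integrable h μ) (hmed : 1 / 2 ≤ μ.real {x | h x ≤ 0}) :
    ∫ x, Fpos (h x) ∂μ ≤ ∫ x, Fpos' (h x) * ‖fderiv ℝ h x‖ ∂μ := by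
  have hg : LipschitzWith (1 * L) fun x => Fpos (h x) := lipschitzWith_Fpos.comp hh
  have hgi : Integrable (fun x => Fpos (h x)) μ := integrable_Fpos_comp hhi
  calc ∫ x, Fpos (h x) ∂μ ≤ ∫ x, |Fpos (h x) - ∫ y, Fpos (h y) ∂μ| ∂μ :=
        integral_le_integral_abs_sub_integral hgi (fun x => Fpos_nonneg _)
          (measurableSet_le hh.continuous.measurable measurable_const)
          (fun x hx => Fpos_of_nonpos hx) hmed
    _ ≤ ∫ x, ‖fderiv ℝ (fun y => Fpos (h y)) x‖ ∂μ := hC _ _ hg hgi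
    _ ≤ ∫ x, Fpos' (h x) * ‖fderiv ℝ h x‖ ∂μ :=
        integral_mono hg.integrable_norm_fderiv
          (hh.integrable_mul_norm_fderiv continuous_Fpos' abs_Fpos'_le_one)
          fun x => by
            simpa [abs_of_nonneg (Fpos'_nonneg _)] using
              hh.norm_fderiv_comp_le hasDerivAt_Fpos continuous_Fpos' x

theorem integral_F_abs_sub_median_le (hC : CheegerInequality μ) (hf : LipschitzWith L f)
    (hfi : Integrable f μ) {m : ℝ} (hm₁ : 1 / 2 ≤ μ.real {x | f x ≤ m})
    (hm₂ : 1 / 2 ≤ μ.real {x | m ≤ f x}) :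
    ∫ x, F |f x - m| ∂μ ≤ 16 * ∫ x, F ‖fderiv ℝ f x‖ ∂μ := by
  have hup := integral_Fpos_le hC (hf.sub (LipschitzWith.const m)) (hfi.sub (integrable_const m))
    (by simpa only [sub_nonpos] using hm₁)
  have hdown := integral_Fpos_le hC ((LipschitzWith.const m).sub hf)
    ((integrable_const m).sub hfi) (by simpa only [sub_nonpos] using hm₂)
  simp only [fderiv_sub_const, fderiv_const_sub, norm_neg] at hup hdown
  have hfm : Integrable (fun x => f x - m) μ := hfi.sub (integrable_const m)
  have hmf : Integrable (fun x => m - f x) μ := (integrable_const m).sub hfi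
  have hX := integrable_F_abs hfm
  have hY : Integrable (fun x => F ‖fderiv ℝ f x‖) μ := by
    simpa using integrable_F_abs (hf.integrable_norm_fderiv (μ := μ))
  have hwup : Integrable (fun x => Fpos' (f x - m) * ‖fderiv ℝ f x‖) μ :=
    hf.integrable_mul_norm_fderiv (w := fun t => Fpos' (t - m))
      (continuous_Fpos'.comp (continuous_sub_right m)) fun t => abs_Fpos'_le_one _
  have hwdown : Integrable (fun x => Fpos' (m - f x) * ‖fderiv ℝ f x‖) μ :=
    hf.integrable_mul_norm_fderiv (w := fun t => Fpos' (m - t))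
      (continuous_Fpos'.comp (continuous_sub_left m)) fun t => abs_Fpos'_le_one _
  have hsplit : ∫ x, F |f x - m| ∂μ = ∫ x, Fpos (f x - m) ∂μ + ∫ x, Fpos (m - f x) ∂μ := by
    rw [← integral_add (integrable_Fpos_comp hfm) (integrable_Fpos_comp hmf)]
    simp only [← Fpos_add_Fpos_neg, neg_sub]
  have hyoung : ∫ x, Fpos' (f x - m) * ‖fderiv ℝ f x‖ ∂μ
      + ∫ x, Fpos' (m - f x) * ‖fderiv ℝ f x‖ ∂μ
      ≤ (∫ x, F |f x - m| ∂μ) / 2 + 8 * ∫ x, F ‖fderiv ℝ f x‖ ∂μ := by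
    rw [← integral_add hwup hwdown, ← integral_div, ← integral_const_mul,
      ← integral_add (hX.div_const 2) (hY.const_mul 8)]
    refine integral_mono (hwup.add hwdown) ((hX.div_const 2).add (hY.const_mul 8)) fun x => ?_
    have := div_one_add_mul_le (abs_nonneg (f x - m)) (norm_nonneg (fderiv ℝ f x))
    rw [← Fpos'_add_Fpos'_neg, neg_sub] at this
    rwa [← add_mul]
  linarith

end Cheeger

end OrliczCheeger

open OrliczCheeger

theorem stmt_12 (n : ℕ) (μ : Measure (EuclideanSpace ℝ (Fin n))) [IsProbabilityMeasure μ]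
    (hCheeger : ∀ (g : EuclideanSpace ℝ (Fin n) → ℝ) (L : NNReal), LipschitzWith L g →
      Integrable g μ →
      ∫ x, |g x - ∫ y, g y ∂μ| ∂μ ≤ ∫ x, ‖fderiv ℝ g x‖ ∂μ)
    (f : EuclideanSpace ℝ (Fin n) → ℝ) (L : NNReal) (hf : LipschitzWith L f)
    (hfi : Integrable f μ) :
    ∫ x, (|f x - ∫ y, f y ∂μ| - Real.log (1 + |f x - ∫ y, f y ∂μ|)) ∂μ ≤
      192 * ∫ x, (‖fderiv ℝ f x‖ - Real.log (1 + ‖fderiv ℝ f x‖)) ∂μ := by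
  have hfm : Measurable f := hf.continuous.measurable
  have : IsProbabilityMeasure (μ.map f) := Measure.isProbabilityMeasure_map hfm.aemeasurable
  obtain ⟨m, hm₁, hm₂⟩ := exists_median (μ.map f)
  rw [map_measureReal_apply hfm measurableSet_Iic] at hm₁
  rw [map_measureReal_apply hfm measurableSet_Ici] at hm₂
  have hmean := integral_F_abs_sub_integral_le hfi m
  have hmedian := integral_F_abs_sub_median_le hCheeger hf hfi hm₁ hm₂
  have hY : 0 ≤ ∫ x, F ‖fderiv ℝ f x‖ ∂μ :=
    integral_nonneg fun x => F_nonneg (by linarith [norm_nonneg (fderiv ℝ f x)])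
  change ∫ x, F |f x - ∫ y, f y ∂μ| ∂μ ≤ 192 * ∫ x, F ‖fderiv ℝ f x‖ ∂μ
  linarith
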